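/- Let V be an E-valued random variable with density g with respect to μ, where g > 0 on the support, let η be uniform on [0,1) independent of V, and set W := c·g(V)·η for a constant c > 0. Then (V, W) has law ν(· ∩ B)/ν(B) where B = {(x,y) : 0 ≤ y ≤ c·g(x)} and ν = μ × Lebesgue; i.e., (V, W) is uniformly distributed on the region under c·g. -/

import Mathlib

/-! By independence the law of `(V, η)` is `(g μ) ⊗ U[0,1)`. On the fibre over `x`, the scaling
`u ↦ c g(x) u` turns `U[0,1)` into the uniform law on `[0, c g(x)]`, of density `1 / (c g(x))`;
weighted by the density `g(x)` of `V` this is the constant `1 / c`. Hence the law of `(V, W)` is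
`c⁻¹ • ν.restrict B`, and `ν B = c ∫ g dμ = c`. -/

open MeasureTheory Set ProbabilityTheory

theorem map_const_mul_volume_restrict_Ico_zero_one {a : ℝ} (ha : 0 < a) :
    Measure.map (a * ·) (volume.restrict (Ico 0 1))
      = ENNReal.ofReal a⁻¹ • volume.restrict (Ico 0 a) := by
  have hpre : (a * ·) ⁻¹' Ico 0 a = Ico 0 1 := by
    simpa [ha.ne'] using preimage_const_mul_Ico₀ 0 a ha
  rw [← hpre, ← Measure.restrict_map (measurable_const_mul a) measurableSet_Ico,
    Real.map_volume_mul_left ha.ne', Measure.restrict_smul, abs_of_pos (inv_pos.mpr ha)]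

theorem ofReal_smul_map_const_mul_volume_restrict_Ico {b c : ℝ} (hb : 0 ≤ b) (hc : 0 < c) :
    ENNReal.ofReal b • Measure.map (c * b * ·) (volume.restrict (Ico 0 1))
      = (ENNReal.ofReal c)⁻¹ • volume.restrict (Icc 0 (c * b)) := by
  rcases hb.eq_or_lt with rfl | hb
  · simp
  rw [map_const_mul_volume_restrict_Ico_zero_one (mul_pos hc hb), smul_smul,
    ← ENNReal.ofReal_mul hb.le, mul_inv, mul_left_comm, mul_inv_cancel₀ hb.ne', mul_one,
    ENNReal.ofReal_inv_of_pos hc, Measure.restrict_congr_set Ico_ae_eq_Icc]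

section Subgraph

variable {E : Type*} [MeasurableSpace E] (μ : Measure E) {f : E → ℝ}

theorem measurableSet_subgraph (hf : Measurable f) :
    MeasurableSet {p : E × ℝ | 0 ≤ p.2 ∧ p.2 ≤ f p.1} :=
  (measurableSet_le measurable_const measurable_snd).inter
    (measurableSet_le measurable_snd (hf.comp measurable_fst))

theorem prod_volume_subgraph (hf : Measurable f) :
    μ.prod volume {p : E × ℝ | 0 ≤ p.2 ∧ p.2 ≤ f p.1} = ∫⁻ x, ENNReal.ofReal (f x) ∂μ := by
  rw [Measure.prod_apply (measurableSet_subgraph hf)]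
  refine lintegral_congr fun x => ?_
  rw [show Prod.mk x ⁻¹' _ = Icc 0 (f x) from rfl, Real.volume_Icc, sub_zero]

theorem map_withDensity_prod_volume_Ico_eq_restrict_subgraph {g : E → ℝ} (hg : Measurable g)
    (hg0 : ∀ x, 0 ≤ g x) {c : ℝ} (hc : 0 < c) :
    Measure.map (fun p : E × ℝ => (p.1, c * g p.1 * p.2))
        ((μ.withDensity fun x => ENNReal.ofReal (g x)).prod (volume.restrict (Ico 0 1)))
      = (ENNReal.ofReal c)⁻¹ •
          (μ.prod volume).restrict {p : E × ℝ | 0 ≤ p.2 ∧ p.2 ≤ c * g p.1} := by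
  have hF : Measurable fun p : E × ℝ => (p.1, c * g p.1 * p.2) := by fun_prop
  ext s hs
  have hFs := hF hs
  have hfiber (x : E) : ENNReal.ofReal (g x) *
      volume.restrict (Ico 0 1) (Prod.mk x ⁻¹' ((fun p : E × ℝ => (p.1, c * g p.1 * p.2)) ⁻¹' s))
      = (ENNReal.ofReal c)⁻¹ * volume (Prod.mk x ⁻¹' s ∩ Icc 0 (c * g x)) := by
    have hsx : MeasurableSet (Prod.mk x ⁻¹' s) := measurable_prodMk_left hs
    have := congrArg (· (Prod.mk x ⁻¹' s)) (ofReal_smul_map_const_mul_volume_restrict_Ico (hg0 x) hc)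
    rwa [Measure.smul_apply, Measure.map_apply (measurable_const_mul _) hsx, Measure.smul_apply,
      Measure.restrict_apply hsx] at this
  rw [Measure.map_apply hF hs, Measure.prod_apply hFs,
    lintegral_withDensity_eq_lintegral_mul _ hg.ennreal_ofReal (measurable_measure_prodMk_left hFs),
    Measure.smul_apply, Measure.restrict_apply hs,
    Measure.prod_apply (hs.inter (measurableSet_subgraph (hg.const_mul c)))]
  simp_rw [Pi.mul_apply, hfiber]
  rw [lintegral_const_mul' _ _ (ENNReal.inv_ne_top.mpr (by simpa using hc)), smul_eq_mul]
  rfl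

end Subgraph

theorem stmt14_general {E : Type*} [MeasurableSpace E] (μ : Measure E)
    (g : E → ℝ) (hg : Measurable g) (hg0 : ∀ x, 0 ≤ g x)
    (c : ℝ) (hc : 0 < c)
    (ν : Measure (E × ℝ)) (hν : ν = μ.prod volume)
    (B : Set (E × ℝ)) (hB : B = {p : E × ℝ | 0 ≤ p.2 ∧ p.2 ≤ c * g p.1})
    {Ω : Type*} [MeasurableSpace Ω] (P : Measure Ω) [IsProbabilityMeasure P]
    (V : Ω → E) (η : Ω → ℝ) (hV : Measurable V) (hη : Measurable η)
    (hVlaw : Measure.map V P = μ.withDensity (fun x => ENNReal.ofReal (g x)))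
    (hηlaw : Measure.map η P = volume.restrict (Ico (0:ℝ) 1))
    (hindep : IndepFun V η P)
    (W : Ω → ℝ) (hW : W = fun ω => c * g (V ω) * η ω) :
    Measure.map (fun ω => (V ω, W ω)) P = (ν B)⁻¹ • ν.restrict B := by
  have hmass : ∫⁻ x, ENNReal.ofReal (g x) ∂μ = 1 := by
    simpa [Measure.map_apply hV MeasurableSet.univ, withDensity_apply] using
      congrArg (· univ) hVlaw.symm
  have hνB : ν B = ENNReal.ofReal c := by
    simp_rw [hν, hB, prod_volume_subgraph μ (hg.const_mul c), ENNReal.ofReal_mul hc.le]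
    rw [lintegral_const_mul _ hg.ennreal_ofReal, hmass, mul_one]
  have hjoint : Measure.map (fun ω => (V ω, η ω)) P = (Measure.map V P).prod (Measure.map η P) :=
    (indepFun_iff_map_prod_eq_prod_map_map hV.aemeasurable hη.aemeasurable).mp hindep
  have hF : Measurable fun p : E × ℝ => (p.1, c * g p.1 * p.2) := by fun_prop
  calc Measure.map (fun ω => (V ω, W ω)) P
      = Measure.map (fun p : E × ℝ => (p.1, c * g p.1 * p.2))
          (Measure.map (fun ω => (V ω, η ω)) P) := by
        rw [Measure.map_map hF (hV.prodMk hη), hW]; rfl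
    _ = (ν B)⁻¹ • ν.restrict B := by
        rw [hjoint, hVlaw, hηlaw, map_withDensity_prod_volume_Ico_eq_restrict_subgraph μ hg hg0 hc,
          hνB, hν, hB]

theorem stmt14 {E : Type*} [MeasurableSpace E] (μ : Measure E) [SigmaFinite μ]
    (g : E → ℝ) (hg : Measurable g) (hg0 : ∀ x, 0 ≤ g x)
    (hgpos : ∀ x ∈ Function.support g, 0 < g x)
    (hgint : Integrable g μ) (hgI : 0 < ∫ x, g x ∂μ)
    (c : ℝ) (hc : 0 < c)
    (ν : Measure (E × ℝ)) (hν : ν = μ.prod volume)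
    (B : Set (E × ℝ)) (hB : B = {p : E × ℝ | 0 ≤ p.2 ∧ p.2 ≤ c * g p.1})
    {Ω : Type*} [MeasurableSpace Ω] (P : Measure Ω) [IsProbabilityMeasure P]
    (V : Ω → E) (η : Ω → ℝ) (hV : Measurable V) (hη : Measurable η)
    (hVlaw : Measure.map V P = μ.withDensity (fun x => ENNReal.ofReal (g x)))
    (hηlaw : Measure.map η P = volume.restrict (Ico (0:ℝ) 1))
    (hindep : IndepFun V η P)
    (W : Ω → ℝ) (hW : W = fun ω => c * g (V ω) * η ω) :
    Measure.map (fun ω => (V ω, W ω)) P = (ν B)⁻¹ • ν.restrict B :=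
  stmt14_general μ g hg hg0 c hc ν hν B hB P V η hV hη hVlaw hηlaw hindep W hW
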